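/- arXiv:2301.12019 — 4 statements merged into one kernel-verified Lean document; each statement's English description precedes it below -/
import Mathlib

section
/- Define the observability coefficient β := inf over u ∈ ℝ^M, u ≠ 0, of √(uᵀ Gᵀ Γ⁻¹ G u) / √(uᵀ Σ_pr⁻¹ u). Then every eigenvalue λ of the posterior covariance matrix Σ_post := ((1/σ²)Gᵀ Γ⁻¹ G + Σ_pr⁻¹)⁻¹ satisfies λ ≤ ((1/σ²) β² + 1)⁻¹ λ_max(Σ_pr), where λ_max(Σ_pr) is the largest eigenvalue of Σ_pr. -/
open Matrix

lemma quad_eq {M : ℕ} (U D : Matrix (Fin M) (Fin M) ℝ) (z : Fin M → ℝ) :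
    z ⬝ᵥ ((U * D * Uᵀ) *ᵥ z) = (Uᵀ *ᵥ z) ⬝ᵥ (D *ᵥ (Uᵀ *ᵥ z)) := by
  rw [← mulVec_mulVec, ← mulVec_mulVec, dotProduct_mulVec, ← mulVec_transpose]

lemma key_bound {M : ℕ} (S : Matrix (Fin M) (Fin M) ℝ) (hS : S.PosDef) (x : Fin M → ℝ) :
    x ⬝ᵥ x ≤ (⨆ i, hS.1.eigenvalues i) * (x ⬝ᵥ (S⁻¹ *ᵥ x)) := by
  cases isEmpty_or_nonempty (Fin M) with
  | inl h =>
    simp [dotProduct, Finset.sum_of_isEmpty]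
  | inr h =>
    set U : Matrix (Fin M) (Fin M) ℝ := (hS.1.eigenvectorUnitary : Matrix (Fin M) (Fin M) ℝ)
    set ev : Fin M → ℝ := hS.1.eigenvalues with hev
    have hUU : Uᵀ * U = 1 := by
      have := (hS.1.eigenvectorUnitary).2.1
      simpa [Matrix.star_eq_conjTranspose,
        Matrix.conjTranspose_eq_transpose_of_trivial] using this
    have hUUt : U * Uᵀ = 1 := by
      have := (hS.1.eigenvectorUnitary).2.2
      simpa [Matrix.star_eq_conjTranspose,
        Matrix.conjTranspose_eq_transpose_of_trivial] using this
    have hspec : S = U * diagonal ev * Uᵀ := by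
      have := hS.1.spectral_theorem
      simpa [RCLike.ofReal_real_eq_id, Matrix.star_eq_conjTranspose,
        Matrix.conjTranspose_eq_transpose_of_trivial] using this
    set z : Fin M → ℝ := S⁻¹ *ᵥ x with hz
    have hxz : x = S *ᵥ z := by
      rw [hz, mulVec_mulVec, Matrix.mul_nonsing_inv S (isUnit_iff_ne_zero.2 hS.det_pos.ne'),
        one_mulVec]
    set w : Fin M → ℝ := Uᵀ *ᵥ z with hw
    have hq2 : x ⬝ᵥ (S⁻¹ *ᵥ x) = ∑ i, ev i * w i ^ 2 := by
      rw [← hz]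
      calc x ⬝ᵥ z = z ⬝ᵥ (S *ᵥ z) := by rw [hxz, dotProduct_comm]
      _ = w ⬝ᵥ (diagonal ev *ᵥ w) := by rw [hspec, quad_eq, hw]
      _ = ∑ i, ev i * w i ^ 2 := by
          simp [dotProduct, mulVec_diagonal]
          exact Finset.sum_congr rfl fun i _ => by ring
    have hq1 : x ⬝ᵥ x = ∑ i, ev i ^ 2 * w i ^ 2 := by
      have hx2 : x = U *ᵥ (diagonal ev *ᵥ w) := by
        rw [hxz, hspec, hw, ← mulVec_mulVec, ← mulVec_mulVec]
      rw [hx2, dotProduct_mulVec, ← mulVec_transpose, mulVec_mulVec, mulVec_mulVec, hUU, Matrix.one_mul]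
      simp [dotProduct, mulVec_diagonal]
      exact Finset.sum_congr rfl fun i _ => by ring
    rw [hq1, hq2, Finset.mul_sum]
    apply Finset.sum_le_sum
    intro i _
    have hevpos : 0 < ev i := hS.eigenvalues_pos i
    have hle : ev i ≤ ⨆ j, ev j := le_ciSup (Set.Finite.bddAbove (Set.finite_range ev)) i
    have : ev i ^ 2 * w i ^ 2 = ev i * (ev i * w i ^ 2) := by ring
    rw [this]
    exact mul_le_mul_of_nonneg_right hle (by positivity) |>.trans_eq (by ring)

/-- Every eigenvalue `λ` of the posterior covariance matrix
`Σ_post = ((1/σ²) Gᵀ Γ⁻¹ G + Σ_pr⁻¹)⁻¹` satisfies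
`λ ≤ ((1/σ²) β² + 1)⁻¹ λ_max(Σ_pr)`, where `β` is the observability coefficient. -/
theorem posterior_eigenvalue_bound {K M : ℕ}
    (σ : ℝ) (hσ : 0 < σ)
    (Γ : Matrix (Fin K) (Fin K) ℝ) (hΓ : Γ.PosDef)
    (Spr : Matrix (Fin M) (Fin M) ℝ) (hpr : Spr.PosDef)
    (G : Matrix (Fin K) (Fin M) ℝ)
    (hpost : ((1 / σ ^ 2) • (Gᵀ * Γ⁻¹ * G) + Spr⁻¹).PosDef)
    (Spost : Matrix (Fin M) (Fin M) ℝ)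
    (hSpost : Spost = ((1 / σ ^ 2) • (Gᵀ * Γ⁻¹ * G) + Spr⁻¹)⁻¹)
    (β : ℝ)
    (hβ : β = ⨅ u : {v : Fin M → ℝ // v ≠ 0},
      Real.sqrt (u.1 ⬝ᵥ ((Gᵀ * Γ⁻¹ * G) *ᵥ u.1)) / Real.sqrt (u.1 ⬝ᵥ (Spr⁻¹ *ᵥ u.1)))
    (lam : ℝ) (hlam : ∃ u : Fin M → ℝ, u ≠ 0 ∧ Spost *ᵥ u = lam • u) :
    lam ≤ ((1 / σ ^ 2) * β ^ 2 + 1)⁻¹ * (⨆ i, hpr.1.eigenvalues i) := by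
  obtain ⟨u, hu0, heig⟩ := hlam
  set A : Matrix (Fin M) (Fin M) ℝ := (1 / σ ^ 2) • (Gᵀ * Γ⁻¹ * G) + Spr⁻¹ with hA
  -- basic positivity facts
  have huu : 0 < u ⬝ᵥ u := by
    have h0 : 0 ≤ u ⬝ᵥ u := Finset.sum_nonneg fun i _ => mul_self_nonneg (u i)
    rcases h0.lt_or_eq with h | h
    · exact h
    · exact absurd ((dotProduct_self_eq_zero).mp h.symm) hu0
  have hAdet : IsUnit A.det := isUnit_iff_ne_zero.2 hpost.det_pos.ne'
  have hlampos : 0 < lam := by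
    have h1 : 0 < u ⬝ᵥ (Spost *ᵥ u) := by
      have := (hSpost ▸ hpost.inv).dotProduct_mulVec_pos hu0
      simpa using this
    rw [heig, dotProduct_smul] at h1
    simp only [smul_eq_mul] at h1
    nlinarith
  -- A *ᵥ u = lam⁻¹ • u
  have hAu : A *ᵥ u = lam⁻¹ • u := by
    have h1 : A *ᵥ (Spost *ᵥ u) = u := by
      rw [hSpost, mulVec_mulVec, Matrix.mul_nonsing_inv A hAdet, one_mulVec]
    rw [heig, mulVec_smul] at h1
    have h2 := congrArg (fun v => lam⁻¹ • v) h1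
    simpa [smul_smul, inv_mul_cancel₀ hlampos.ne'] using h2
  set p : ℝ := u ⬝ᵥ ((Gᵀ * Γ⁻¹ * G) *ᵥ u) with hp
  set q : ℝ := u ⬝ᵥ (Spr⁻¹ *ᵥ u) with hq
  have hqpos : 0 < q := by
    have := hpr.inv.dotProduct_mulVec_pos hu0
    simpa [hq] using this
  have hpnn : 0 ≤ p := by
    have hps : (Gᵀ * Γ⁻¹ * G).PosSemidef := by
      have := hΓ.inv.posSemidef.conjTranspose_mul_mul_same G
      simpa [Matrix.conjTranspose_eq_transpose_of_trivial] using this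
    have := hps.dotProduct_mulVec_nonneg u
    simpa [hp] using this
  have hquad : lam⁻¹ * (u ⬝ᵥ u) = (1 / σ ^ 2) * p + q := by
    have : u ⬝ᵥ (A *ᵥ u) = lam⁻¹ * (u ⬝ᵥ u) := by
      rw [hAu, dotProduct_smul]; simp
    rw [← this, hA, add_mulVec, smul_mulVec, dotProduct_add, dotProduct_smul]
    simp [hp, hq]
  -- beta facts
  have hβnn : 0 ≤ β := by
    rw [hβ]
    exact Real.iInf_nonneg fun v => div_nonneg (Real.sqrt_nonneg _) (Real.sqrt_nonneg _)
  have hβle : β ≤ Real.sqrt p / Real.sqrt q := by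
    have hbdd : BddBelow (Set.range fun v : {v : Fin M → ℝ // v ≠ 0} =>
        Real.sqrt (v.1 ⬝ᵥ ((Gᵀ * Γ⁻¹ * G) *ᵥ v.1)) / Real.sqrt (v.1 ⬝ᵥ (Spr⁻¹ *ᵥ v.1))) := by
      refine ⟨0, ?_⟩
      rintro x ⟨v, rfl⟩
      positivity
    rw [hβ]
    exact ciInf_le hbdd ⟨u, hu0⟩
  have hβ2q : β ^ 2 * q ≤ p := by
    have hsq : β * Real.sqrt q ≤ Real.sqrt p :=
      (le_div_iff₀ (Real.sqrt_pos.2 hqpos)).mp hβle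
    have h5 := mul_self_le_mul_self (by positivity : (0:ℝ) ≤ β * Real.sqrt q) hsq
    have hq' : Real.sqrt q ^ 2 = q := Real.sq_sqrt hqpos.le
    have hp' : Real.sqrt p ^ 2 = p := Real.sq_sqrt hpnn
    nlinarith [h5, hq', hp']
  set c : ℝ := (1 / σ ^ 2) * β ^ 2 + 1 with hc
  have hcpos : 0 < c := by positivity
  have hcq : c * q ≤ lam⁻¹ * (u ⬝ᵥ u) := by
    rw [hquad, hc, add_mul, one_mul]
    have : (1 / σ ^ 2) * β ^ 2 * q ≤ (1 / σ ^ 2) * p := by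
      rw [mul_assoc]
      exact mul_le_mul_of_nonneg_left hβ2q (by positivity)
    linarith
  set lmax : ℝ := ⨆ i, hpr.1.eigenvalues i with hlmax
  have hkey : u ⬝ᵥ u ≤ lmax * q := key_bound Spr hpr u
  have hM : Nonempty (Fin M) := by
    by_contra h
    rw [not_nonempty_iff] at h
    exact hu0 (funext fun i => (h.false i).elim)
  have hlmaxpos : 0 < lmax := by
    obtain ⟨i⟩ := hM
    exact lt_of_lt_of_le (hpr.eigenvalues_pos i)
      (le_ciSup (Set.Finite.bddAbove (Set.finite_range _)) i)
  -- conclude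
  have h1 : c / lmax * (u ⬝ᵥ u) ≤ lam⁻¹ * (u ⬝ᵥ u) := by
    calc c / lmax * (u ⬝ᵥ u) ≤ c / lmax * (lmax * q) :=
          mul_le_mul_of_nonneg_left hkey (by positivity)
      _ = c * q := by field_simp
      _ ≤ lam⁻¹ * (u ⬝ᵥ u) := hcq
  have h2 : c / lmax ≤ lam⁻¹ := le_of_mul_le_mul_right (by simpa [mul_comm] using h1) huu
  have h3 : lam ≤ (c / lmax)⁻¹ := by
    rw [← inv_inv lam]
    exact inv_anti₀ (by positivity) h2
  calc lam ≤ (c / lmax)⁻¹ := h3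
    _ = c⁻¹ * lmax := by rw [inv_div]; ring
end

section
/- (Proposition 3.1.) Assume η_low := inf_{u≠0} ‖x(u)‖_X / ‖u‖_pr > 0, and let x̃ : ℝ^M → X satisfy ‖x(u) − x̃(u)‖_X ≤ ε ‖x(u)‖_X for all u ∈ ℝ^M, where 0 ≤ ε < 1. Then (1−ε) β̃_W − γ ε ≤ β_W ≤ (1+ε) β̃_W + γ ε, where β_W := inf_{u≠0} ‖L x(u)‖_Γ / ‖x(u)‖_X and β̃_W := inf_{u≠0} ‖L x̃(u)‖_Γ / ‖x̃(u)‖_X. -/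
open Matrix

/-- The norm `‖d‖_A := √(dᵀ A⁻¹ d)` induced by the inverse of an SPD matrix `A`. -/
noncomputable def invWeightedNorm {n : ℕ} (A : Matrix (Fin n) (Fin n) ℝ) (d : Fin n → ℝ) : ℝ :=
  Real.sqrt (d ⬝ᵥ (A⁻¹ *ᵥ d))

noncomputable def matEuc {n : ℕ} (S : Matrix (Fin n) (Fin n) ℝ) :
    (Fin n → ℝ) →L[ℝ] EuclideanSpace ℝ (Fin n) :=
  LinearMap.toContinuousLinearMap
    (((WithLp.linearEquiv 2 ℝ (Fin n → ℝ)).symm.toLinearMap).comp S.mulVecLin)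

open scoped MatrixOrder in
noncomputable def psdSqrt {n : ℕ} (A : Matrix (Fin n) (Fin n) ℝ) : Matrix (Fin n) (Fin n) ℝ :=
  CFC.sqrt A

open scoped MatrixOrder in
lemma psdSqrt_mul_self {n : ℕ} {A : Matrix (Fin n) (Fin n) ℝ} (hA : A.PosSemidef) :
    psdSqrt A * psdSqrt A = A :=
  CFC.sqrt_mul_sqrt_self A hA.nonneg

open scoped MatrixOrder in
lemma psdSqrt_isHermitian {n : ℕ} (A : Matrix (Fin n) (Fin n) ℝ) :
    (psdSqrt A).IsHermitian :=
  (CFC.sqrt_nonneg A).posSemidef.isHermitian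

lemma matEuc_apply {n : ℕ} (S : Matrix (Fin n) (Fin n) ℝ) (d : Fin n → ℝ) (i : Fin n) :
    matEuc S d i = (S *ᵥ d) i := rfl

lemma invWeightedNorm_eq_norm {n : ℕ} {A : Matrix (Fin n) (Fin n) ℝ} (hA : A.PosDef)
    (d : Fin n → ℝ) :
    invWeightedNorm A d = ‖matEuc (psdSqrt A⁻¹) d‖ := by
  set S := psdSqrt A⁻¹ with hSdef
  have hsym : Sᵀ = S := by
    have h := psdSqrt_isHermitian A⁻¹
    rwa [Matrix.IsHermitian, conjTranspose_eq_transpose_of_trivial] at h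
  have key : d ⬝ᵥ A⁻¹ *ᵥ d = (S *ᵥ d) ⬝ᵥ (S *ᵥ d) := by
    rw [← psdSqrt_mul_self hA.inv.posSemidef, ← hSdef, ← Matrix.mulVec_mulVec,
      Matrix.dotProduct_mulVec]
    congr 1
    rw [← Matrix.mulVec_transpose, hsym]
  rw [invWeightedNorm, key, EuclideanSpace.norm_eq]
  congr 1
  rw [dotProduct]
  refine Finset.sum_congr rfl fun i _ => ?_
  rw [matEuc_apply, Real.norm_eq_abs, sq_abs, sq]

/-- Proposition 3.1: stability of the state observability coefficient `β_W` under
relative state approximation error `ε`: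
`(1−ε) β̃_W − γ ε ≤ β_W ≤ (1+ε) β̃_W + γ ε`. -/
theorem observability_W_model_approximation {K M : ℕ}
    {X : Type*} [NormedAddCommGroup X] [InnerProductSpace ℝ X]
    (x : (Fin M → ℝ) →L[ℝ] X) (L : X →L[ℝ] (Fin K → ℝ))
    (Γ : Matrix (Fin K) (Fin K) ℝ) (hΓ : Γ.PosDef)
    (Spr : Matrix (Fin M) (Fin M) ℝ) (hpr : Spr.PosDef)
    (hη : 0 < ⨅ u : {v : Fin M → ℝ // v ≠ 0}, ‖x u.1‖ / invWeightedNorm Spr u.1)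
    (xt : (Fin M → ℝ) → X) (ε : ℝ) (hε0 : 0 ≤ ε) (hε1 : ε < 1)
    (happrox : ∀ u : Fin M → ℝ, ‖x u - xt u‖ ≤ ε * ‖x u‖)
    (γ βW βWt : ℝ)
    (hγ : γ = ⨆ w : {w : X // ‖w‖ = 1}, invWeightedNorm Γ (L w.1))
    (hβW : βW = ⨅ u : {v : Fin M → ℝ // v ≠ 0},
      invWeightedNorm Γ (L (x u.1)) / ‖x u.1‖)
    (hβWt : βWt = ⨅ u : {v : Fin M → ℝ // v ≠ 0},
      invWeightedNorm Γ (L (xt u.1)) / ‖xt u.1‖) :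
    (1 - ε) * βWt - γ * ε ≤ βW ∧ βW ≤ (1 + ε) * βWt + γ * ε := by
  -- notation
  set ι := {v : Fin M → ℝ // v ≠ 0}
  set T : X →L[ℝ] EuclideanSpace ℝ (Fin K) := (matEuc (psdSqrt Γ⁻¹)).comp L with hT
  have hN : ∀ w : X, invWeightedNorm Γ (L w) = ‖T w‖ := fun w =>
    invWeightedNorm_eq_norm hΓ (L w)
  -- nonempty index type
  have hne : Nonempty ι := by
    by_contra h
    rw [not_nonempty_iff] at h
    rw [Real.iInf_of_isEmpty] at hη
    exact lt_irrefl 0 hη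
  -- positivity of the prior weighted norm
  have hprpos : ∀ u : Fin M → ℝ, u ≠ 0 → 0 < invWeightedNorm Spr u := by
    intro u hu
    have h := hpr.inv.dotProduct_mulVec_pos hu
    simp only [RCLike.star_def, starRingEnd_apply, star_trivial] at h
    exact Real.sqrt_pos.2 (by simpa using h)
  -- boundedness below of the quotient families
  have hfbdd : BddBelow (Set.range fun u : ι => invWeightedNorm Γ (L (x u.1)) / ‖x u.1‖) := by
    refine ⟨0, ?_⟩
    rintro y ⟨u, rfl⟩
    exact div_nonneg (Real.sqrt_nonneg _) (norm_nonneg _)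
  have hgbdd : BddBelow (Set.range fun u : ι => invWeightedNorm Γ (L (xt u.1)) / ‖xt u.1‖) := by
    refine ⟨0, ?_⟩
    rintro y ⟨u, rfl⟩
    exact div_nonneg (Real.sqrt_nonneg _) (norm_nonneg _)
  have hηbdd : BddBelow (Set.range fun u : ι => ‖x u.1‖ / invWeightedNorm Spr u.1) := by
    refine ⟨0, ?_⟩
    rintro y ⟨u, rfl⟩
    exact div_nonneg (norm_nonneg _) (Real.sqrt_nonneg _)
  -- x u ≠ 0 for u ≠ 0
  have hxpos : ∀ u : ι, 0 < ‖x u.1‖ := by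
    intro u
    have h1 : (0:ℝ) < ‖x u.1‖ / invWeightedNorm Spr u.1 :=
      lt_of_lt_of_le hη (ciInf_le hηbdd u)
    by_contra h
    push_neg at h
    have : ‖x u.1‖ = 0 := le_antisymm h (norm_nonneg _)
    rw [this, zero_div] at h1
    exact lt_irrefl 0 h1
  -- γ facts
  have hγbdd : BddAbove (Set.range fun w : {w : X // ‖w‖ = 1} => invWeightedNorm Γ (L w.1)) := by
    refine ⟨‖T‖, ?_⟩
    rintro y ⟨w, rfl⟩
    show invWeightedNorm Γ (L w.1) ≤ ‖T‖
    rw [hN]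
    calc ‖T w.1‖ ≤ ‖T‖ * ‖w.1‖ := T.le_opNorm _
    _ = ‖T‖ := by rw [w.2, mul_one]
  have hγle : ∀ w : X, ‖T w‖ ≤ γ * ‖w‖ := by
    intro w
    rcases eq_or_ne w 0 with rfl | hw
    · simp
    · have hwpos : 0 < ‖w‖ := norm_pos_iff.2 hw
      have hunit : ‖(‖w‖⁻¹ • w)‖ = 1 := by
        rw [norm_smul, norm_inv, norm_norm, inv_mul_cancel₀ hwpos.ne']
      have h1 : invWeightedNorm Γ (L (‖w‖⁻¹ • w)) ≤ γ := by
        rw [hγ]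
        exact le_ciSup hγbdd ⟨‖w‖⁻¹ • w, hunit⟩
      rw [hN] at h1
      have h2 : ‖T (‖w‖⁻¹ • w)‖ = ‖w‖⁻¹ * ‖T w‖ := by
        rw [_root_.map_smul, norm_smul, norm_inv, norm_norm]
      rw [h2] at h1
      rw [mul_comm]
      exact (inv_mul_le_iff₀ hwpos).1 h1
  have hγ0 : 0 ≤ γ := by
    obtain ⟨u⟩ := hne
    have h := hγle (x u.1)
    have := norm_nonneg (T (x u.1))
    nlinarith [hxpos u]
  -- per-index facts
  have hx_xt : ∀ u : ι, (1 - ε) * ‖x u.1‖ ≤ ‖xt u.1‖ ∧ ‖xt u.1‖ ≤ (1 + ε) * ‖x u.1‖ := by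
    intro u
    have h1 := happrox u.1
    have h2 := norm_sub_norm_le (x u.1) (xt u.1)
    have h3 := norm_sub_norm_le (xt u.1) (x u.1)
    rw [norm_sub_rev] at h3
    constructor <;> linarith
  have hxtpos : ∀ u : ι, 0 < ‖xt u.1‖ := by
    intro u
    have := (hx_xt u).1
    nlinarith [hxpos u]
  have hTdiff : ∀ u : ι, ‖T (x u.1)‖ - ‖T (xt u.1)‖ ≤ γ * ε * ‖x u.1‖ ∧
      ‖T (xt u.1)‖ - ‖T (x u.1)‖ ≤ γ * ε * ‖x u.1‖ := by
    intro u
    have h1 : ‖T (x u.1) - T (xt u.1)‖ ≤ γ * ε * ‖x u.1‖ := by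
      have h2 : T (x u.1) - T (xt u.1) = T (x u.1 - xt u.1) := by rw [map_sub]
      rw [h2]
      calc ‖T (x u.1 - xt u.1)‖ ≤ γ * ‖x u.1 - xt u.1‖ := hγle _
      _ ≤ γ * (ε * ‖x u.1‖) := by
          exact mul_le_mul_of_nonneg_left (happrox u.1) hγ0
      _ = γ * ε * ‖x u.1‖ := by ring
    have h2 := norm_sub_norm_le (T (x u.1)) (T (xt u.1))
    have h3 := norm_sub_norm_le (T (xt u.1)) (T (x u.1))
    rw [norm_sub_rev] at h3
    constructor <;> linarith
  -- pointwise quotient bounds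
  have claim1 : ∀ u : ι, invWeightedNorm Γ (L (x u.1)) / ‖x u.1‖ ≤
      (1 + ε) * (invWeightedNorm Γ (L (xt u.1)) / ‖xt u.1‖) + γ * ε := by
    intro u
    rw [hN, hN]
    set a := ‖x u.1‖
    set b := ‖xt u.1‖
    have ha := hxpos u
    have hb := hxtpos u
    set q := ‖T (xt u.1)‖ / b with hq
    have hq0 : 0 ≤ q := div_nonneg (norm_nonneg _) (norm_nonneg _)
    have hqb : ‖T (xt u.1)‖ = q * b := by rw [hq, div_mul_cancel₀ _ hb.ne']
    rw [div_le_iff₀ ha]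
    have h1 := (hTdiff u).1
    rw [hqb] at h1
    have h2 := (hx_xt u).2
    have h5 : q * b ≤ q * ((1 + ε) * a) := mul_le_mul_of_nonneg_left h2 hq0
    linarith
  have claim2 : ∀ u : ι, (1 - ε) * (invWeightedNorm Γ (L (xt u.1)) / ‖xt u.1‖) - γ * ε ≤
      invWeightedNorm Γ (L (x u.1)) / ‖x u.1‖ := by
    intro u
    rw [hN, hN]
    set a := ‖x u.1‖
    set b := ‖xt u.1‖
    have ha := hxpos u
    have hb := hxtpos u
    set q := ‖T (xt u.1)‖ / b with hq
    have hq0 : 0 ≤ q := div_nonneg (norm_nonneg _) (norm_nonneg _)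
    have hqb : ‖T (xt u.1)‖ = q * b := by rw [hq, div_mul_cancel₀ _ hb.ne']
    rw [le_div_iff₀ ha]
    have h1 := (hTdiff u).2
    rw [hqb] at h1
    have h2 := (hx_xt u).1
    have h5 : q * ((1 - ε) * a) ≤ q * b := mul_le_mul_of_nonneg_left h2 hq0
    linarith
  constructor
  · -- lower bound
    rw [hβW]
    apply le_ciInf
    intro u
    have h1 : βWt ≤ invWeightedNorm Γ (L (xt u.1)) / ‖xt u.1‖ := by
      rw [hβWt]; exact ciInf_le hgbdd u
    have h2 := claim2 u
    have h4 : (1 - ε) * βWt ≤ (1 - ε) * (invWeightedNorm Γ (L (xt u.1)) / ‖xt u.1‖) :=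
      mul_le_mul_of_nonneg_left h1 (by linarith)
    linarith
  · -- upper bound
    have h : ∀ u : ι, (βW - γ * ε) / (1 + ε) ≤ invWeightedNorm Γ (L (xt u.1)) / ‖xt u.1‖ := by
      intro u
      have h1 : βW ≤ invWeightedNorm Γ (L (x u.1)) / ‖x u.1‖ := by
        rw [hβW]; exact ciInf_le hfbdd u
      have h2 := claim1 u
      rw [div_le_iff₀ (by linarith : (0:ℝ) < 1 + ε)]
      linarith
    have h3 : (βW - γ * ε) / (1 + ε) ≤ βWt := by
      rw [hβWt]; exact le_ciInf h
    rw [div_le_iff₀ (by linarith : (0:ℝ) < 1 + ε)] at h3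
    linarith
end

section
/- (Proposition 3.2.) Let x̃ : ℝ^M → X satisfy ‖x(u) − x̃(u)‖_X ≤ ε ‖x(u)‖_X for all u ∈ ℝ^M, where 0 ≤ ε < 1, and let η̄ := sup_{u≠0} ‖x(u)‖_X / ‖u‖_pr (finite since x is continuous). Then β̃_G − γ η̄ ε ≤ β_G ≤ β̃_G + γ η̄ ε, where β_G := inf_{u≠0} ‖L x(u)‖_Γ / ‖u‖_pr and β̃_G := inf_{u≠0} ‖L x̃(u)‖_Γ / ‖u‖_pr. -/
open Matrix

lemma iwn_nonneg {n : ℕ} (A : Matrix (Fin n) (Fin n) ℝ) (d : Fin n → ℝ) :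
    0 ≤ invWeightedNorm A d := Real.sqrt_nonneg _

lemma iwn_eq_norm {n : ℕ} {A : Matrix (Fin n) (Fin n) ℝ} (hA : A.PosDef) (d : Fin n → ℝ) :
    invWeightedNorm A d = @norm _ (Matrix.toNormedAddCommGroup _ hA.inv).toNorm d := by
  show Real.sqrt _ = Real.sqrt _
  rw [dotProduct_comm]
  rfl

lemma iwn_zero {n : ℕ} (A : Matrix (Fin n) (Fin n) ℝ) : invWeightedNorm A 0 = 0 := by
  simp [invWeightedNorm]

lemma iwn_triangle {n : ℕ} {A : Matrix (Fin n) (Fin n) ℝ} (hA : A.PosDef) (v w : Fin n → ℝ) :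
    invWeightedNorm A (v + w) ≤ invWeightedNorm A v + invWeightedNorm A w := by
  rw [iwn_eq_norm hA, iwn_eq_norm hA, iwn_eq_norm hA]
  exact @norm_add_le _ (@SeminormedAddCommGroup.toSeminormedAddGroup _
    (Matrix.toNormedAddCommGroup _ hA.inv).toSeminormedAddCommGroup) v w

lemma iwn_smul {n : ℕ} (A : Matrix (Fin n) (Fin n) ℝ) (c : ℝ) (v : Fin n → ℝ) :
    invWeightedNorm A (c • v) = |c| * invWeightedNorm A v := by
  unfold invWeightedNorm
  rw [mulVec_smul, smul_dotProduct, dotProduct_smul, smul_eq_mul, smul_eq_mul, ← mul_assoc,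
    ← sq, Real.sqrt_mul (sq_nonneg c), Real.sqrt_sq_eq_abs]

lemma iwn_pos {n : ℕ} {A : Matrix (Fin n) (Fin n) ℝ} (hA : A.PosDef) {d : Fin n → ℝ}
    (hd : d ≠ 0) : 0 < invWeightedNorm A d := by
  apply Real.sqrt_pos.2
  simpa using hA.inv.dotProduct_mulVec_pos hd

lemma iwn_continuous {n : ℕ} (A : Matrix (Fin n) (Fin n) ℝ) :
    Continuous (invWeightedNorm A) := by
  apply Real.continuous_sqrt.comp
  have : Continuous fun v : Fin n → ℝ => ∑ i, v i * ∑ j, A⁻¹ i j * v j := by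
    apply continuous_finset_sum
    intro i _
    exact (continuous_apply i).mul (continuous_finset_sum _ fun j _ =>
      continuous_const.mul (continuous_apply j))
  exact this

lemma iwn_upper {n : ℕ} (A : Matrix (Fin n) (Fin n) ℝ) :
    ∃ C : ℝ, 0 ≤ C ∧ ∀ v : Fin n → ℝ, invWeightedNorm A v ≤ C * ‖v‖ := by
  refine ⟨Real.sqrt (∑ i, ∑ j, |A⁻¹ i j|), Real.sqrt_nonneg _, fun v => ?_⟩
  unfold invWeightedNorm
  rw [← Real.sqrt_sq (norm_nonneg v), ← Real.sqrt_mul (by positivity)]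
  apply Real.sqrt_le_sqrt
  calc v ⬝ᵥ A⁻¹ *ᵥ v ≤ |v ⬝ᵥ A⁻¹ *ᵥ v| := le_abs_self _
    _ ≤ ∑ i, |v i * (A⁻¹ *ᵥ v) i| := by
        simpa [dotProduct] using Finset.abs_sum_le_sum_abs (fun i => v i * (A⁻¹ *ᵥ v) i) Finset.univ
    _ ≤ ∑ i, ∑ j, |A⁻¹ i j| * (‖v‖ * ‖v‖) := by
        apply Finset.sum_le_sum
        intro i _
        rw [abs_mul]
        calc |v i| * |(A⁻¹ *ᵥ v) i| ≤ ‖v‖ * ∑ j, |A⁻¹ i j| * ‖v‖ := by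
              apply mul_le_mul (norm_le_pi_norm v i) ?_ (abs_nonneg _) (norm_nonneg _)
              calc |(A⁻¹ *ᵥ v) i| ≤ ∑ j, |A⁻¹ i j * v j| := by
                    simpa [mulVec, dotProduct] using
                      Finset.abs_sum_le_sum_abs (fun j => A⁻¹ i j * v j) Finset.univ
                _ ≤ ∑ j, |A⁻¹ i j| * ‖v‖ := by
                    apply Finset.sum_le_sum
                    intro j _
                    rw [abs_mul]
                    exact mul_le_mul_of_nonneg_left (norm_le_pi_norm v j) (abs_nonneg _)
          _ = ∑ j, |A⁻¹ i j| * (‖v‖ * ‖v‖) := by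
              rw [Finset.mul_sum]
              exact Finset.sum_congr rfl fun j _ => by ring
    _ = (∑ i, ∑ j, |A⁻¹ i j|) * (‖v‖ * ‖v‖) := by
        rw [Finset.sum_mul]
        congr 1 with i
        rw [Finset.sum_mul]
    _ = (∑ i, ∑ j, |A⁻¹ i j|) * ‖v‖ ^ 2 := by rw [sq]
  
lemma iwn_lower {n : ℕ} {A : Matrix (Fin n) (Fin n) ℝ} (hA : A.PosDef) [NeZero n] :
    ∃ c : ℝ, 0 < c ∧ ∀ v : Fin n → ℝ, c * ‖v‖ ≤ invWeightedNorm A v := by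
  have hS : IsCompact (Metric.sphere (0 : Fin n → ℝ) 1) := isCompact_sphere _ _
  have hne : (Metric.sphere (0 : Fin n → ℝ) 1).Nonempty := by
    haveI : Nontrivial (Fin n → ℝ) := by
      exact Function.nontrivial
    exact NormedSpace.sphere_nonempty.2 zero_le_one
  obtain ⟨v0, hv0mem, hmin⟩ := hS.exists_isMinOn hne (iwn_continuous A).continuousOn
  have hv0 : ‖v0‖ = 1 := by simpa using hv0mem
  have hv0ne : v0 ≠ 0 := by intro h; rw [h] at hv0; simp at hv0
  refine ⟨invWeightedNorm A v0, iwn_pos hA hv0ne, fun v => ?_⟩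
  rcases eq_or_ne v 0 with rfl | hv
  · simp [iwn_zero]
  · have hnv : 0 < ‖v‖ := norm_pos_iff.2 hv
    have hw : (‖v‖⁻¹ • v) ∈ Metric.sphere (0 : Fin n → ℝ) 1 := by
      simp [norm_smul, abs_of_pos (inv_pos.2 hnv), inv_mul_cancel₀ hnv.ne']
    have := hmin hw
    have h2 : invWeightedNorm A v0 ≤ |‖v‖⁻¹| * invWeightedNorm A v := by
      rw [← iwn_smul]; exact this
    rw [abs_of_pos (inv_pos.2 hnv)] at h2
    calc invWeightedNorm A v0 * ‖v‖ ≤ (‖v‖⁻¹ * invWeightedNorm A v) * ‖v‖ :=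
          mul_le_mul_of_nonneg_right h2 (norm_nonneg v)
      _ = invWeightedNorm A v := by field_simp

/-- Proposition 3.2: stability of the parameter-to-observable observability coefficient
`β_G` under relative state approximation error `ε`:
`β̃_G − γ η̄ ε ≤ β_G ≤ β̃_G + γ η̄ ε`. -/
theorem observability_G_model_approximation {K M : ℕ}
    {X : Type*} [NormedAddCommGroup X] [InnerProductSpace ℝ X]
    (x : (Fin M → ℝ) →L[ℝ] X) (L : X →L[ℝ] (Fin K → ℝ))
    (Γ : Matrix (Fin K) (Fin K) ℝ) (hΓ : Γ.PosDef)
    (Spr : Matrix (Fin M) (Fin M) ℝ) (hpr : Spr.PosDef)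
    (xt : (Fin M → ℝ) → X) (ε : ℝ) (hε0 : 0 ≤ ε) (hε1 : ε < 1)
    (happrox : ∀ u : Fin M → ℝ, ‖x u - xt u‖ ≤ ε * ‖x u‖)
    (γ ηbar βG βGt : ℝ)
    (hγ : γ = ⨆ w : {w : X // ‖w‖ = 1}, invWeightedNorm Γ (L w.1))
    (hηbar : ηbar = ⨆ u : {v : Fin M → ℝ // v ≠ 0}, ‖x u.1‖ / invWeightedNorm Spr u.1)
    (hβG : βG = ⨅ u : {v : Fin M → ℝ // v ≠ 0},
      invWeightedNorm Γ (L (x u.1)) / invWeightedNorm Spr u.1)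
    (hβGt : βGt = ⨅ u : {v : Fin M → ℝ // v ≠ 0},
      invWeightedNorm Γ (L (xt u.1)) / invWeightedNorm Spr u.1) :
    βGt - γ * ηbar * ε ≤ βG ∧ βG ≤ βGt + γ * ηbar * ε := by
  obtain ⟨CΓ, hCΓ0, hCΓ⟩ := iwn_upper Γ
  -- the sup defining γ is attained over a bounded family
  have hFbdd : BddAbove (Set.range fun w : {w : X // ‖w‖ = 1} =>
      invWeightedNorm Γ (L w.1)) := by
    refine ⟨CΓ * ‖L‖, ?_⟩
    rintro y ⟨w, rfl⟩
    calc invWeightedNorm Γ (L w.1) ≤ CΓ * ‖L w.1‖ := hCΓ _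
      _ ≤ CΓ * ‖L‖ := by
          have := L.le_opNorm w.1
          rw [w.2, mul_one] at this
          exact mul_le_mul_of_nonneg_left this hCΓ0
  have hγ0 : 0 ≤ γ := by
    rcases isEmpty_or_nonempty {w : X // ‖w‖ = 1} with h | h
    · rw [hγ, Real.iSup_of_isEmpty]
    · obtain ⟨w⟩ := h
      calc (0:ℝ) ≤ invWeightedNorm Γ (L w.1) := iwn_nonneg _ _
        _ ≤ γ := hγ ▸ le_ciSup hFbdd w
  -- γ bounds the Γ-weighted norm of L z
  have hLz : ∀ z : X, invWeightedNorm Γ (L z) ≤ γ * ‖z‖ := by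
    intro z
    rcases eq_or_ne z 0 with rfl | hz
    · simp [iwn_zero]
    · have hnz : 0 < ‖z‖ := norm_pos_iff.2 hz
      have hw : ‖(‖z‖⁻¹ • z)‖ = 1 := by
        simp [norm_smul, abs_of_pos (inv_pos.2 hnz), inv_mul_cancel₀ hnz.ne']
      have h1 : invWeightedNorm Γ (L (‖z‖⁻¹ • z)) ≤ γ := hγ ▸ le_ciSup hFbdd ⟨_, hw⟩
      have h2 : L z = ‖z‖ • L (‖z‖⁻¹ • z) := by
        rw [ContinuousLinearMap.map_smul, smul_smul, mul_inv_cancel₀ hnz.ne', one_smul]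
      rw [h2, iwn_smul, abs_of_pos hnz, mul_comm]
      exact mul_le_mul_of_nonneg_right h1 (norm_nonneg z)
  rcases isEmpty_or_nonempty {v : Fin M → ℝ // v ≠ 0} with hEmp | hNe
  · rw [hβG, hβGt, hηbar, Real.iInf_of_isEmpty, Real.iInf_of_isEmpty, Real.iSup_of_isEmpty]
    constructor <;> nlinarith
  · -- M ≠ 0
    obtain ⟨u0⟩ := id hNe
    haveI : NeZero M := by
      refine ⟨fun hM => u0.2 ?_⟩
      subst hM
      exact funext fun i => absurd i.2 (by omega)
    obtain ⟨c, hc0, hc⟩ := iwn_lower hpr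
    -- ηbar bounds ‖x u‖ / ‖u‖_pr
    have hPpos : ∀ u : {v : Fin M → ℝ // v ≠ 0}, 0 < invWeightedNorm Spr u.1 :=
      fun u => iwn_pos hpr u.2
    have hηbdd : BddAbove (Set.range fun u : {v : Fin M → ℝ // v ≠ 0} =>
        ‖x u.1‖ / invWeightedNorm Spr u.1) := by
      refine ⟨‖x‖ / c, ?_⟩
      rintro y ⟨u, rfl⟩
      have hnu : 0 < ‖u.1‖ := norm_pos_iff.2 u.2
      calc ‖x u.1‖ / invWeightedNorm Spr u.1 ≤ (‖x‖ * ‖u.1‖) / (c * ‖u.1‖) :=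
            div_le_div₀ (by positivity) (x.le_opNorm u.1) (by positivity) (hc u.1)
        _ = ‖x‖ / c := mul_div_mul_right _ _ hnu.ne'
    have hη : ∀ u : {v : Fin M → ℝ // v ≠ 0}, ‖x u.1‖ / invWeightedNorm Spr u.1 ≤ ηbar :=
      fun u => hηbar ▸ le_ciSup hηbdd u
    have hη0 : 0 ≤ ηbar := le_trans (div_nonneg (norm_nonneg _) (iwn_nonneg _ _)) (hη u0)
    -- pointwise two-sided estimate
    have key : ∀ u : {v : Fin M → ℝ // v ≠ 0},
        invWeightedNorm Γ (L (x u.1)) / invWeightedNorm Spr u.1 ≤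
          invWeightedNorm Γ (L (xt u.1)) / invWeightedNorm Spr u.1 + γ * ηbar * ε ∧
        invWeightedNorm Γ (L (xt u.1)) / invWeightedNorm Spr u.1 ≤
          invWeightedNorm Γ (L (x u.1)) / invWeightedNorm Spr u.1 + γ * ηbar * ε := by
      intro u
      have hp := hPpos u
      have herr : invWeightedNorm Γ (L (x u.1 - xt u.1)) ≤ γ * (ε * ‖x u.1‖) := by
        calc invWeightedNorm Γ (L (x u.1 - xt u.1)) ≤ γ * ‖x u.1 - xt u.1‖ := hLz _
          _ ≤ γ * (ε * ‖x u.1‖) := mul_le_mul_of_nonneg_left (happrox u.1) hγ0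
      have hεη : γ * ε * (‖x u.1‖ / invWeightedNorm Spr u.1) ≤ γ * ηbar * ε := by
        calc γ * ε * (‖x u.1‖ / invWeightedNorm Spr u.1) ≤ γ * ε * ηbar :=
              mul_le_mul_of_nonneg_left (hη u) (by positivity)
          _ = γ * ηbar * ε := by ring
      constructor
      · have htri : invWeightedNorm Γ (L (x u.1)) ≤
            invWeightedNorm Γ (L (xt u.1)) + γ * (ε * ‖x u.1‖) := by
          have hsplit : L (x u.1) = L (xt u.1) + L (x u.1 - xt u.1) := by
            rw [← map_add]; congr 1; abel
          calc invWeightedNorm Γ (L (x u.1)) ≤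
              invWeightedNorm Γ (L (xt u.1)) + invWeightedNorm Γ (L (x u.1 - xt u.1)) := by
                rw [hsplit]; exact iwn_triangle hΓ _ _
            _ ≤ _ := by linarith [herr]
        calc invWeightedNorm Γ (L (x u.1)) / invWeightedNorm Spr u.1 ≤
            (invWeightedNorm Γ (L (xt u.1)) + γ * (ε * ‖x u.1‖)) / invWeightedNorm Spr u.1 :=
              (div_le_div_iff_of_pos_right hp).2 htri
          _ = invWeightedNorm Γ (L (xt u.1)) / invWeightedNorm Spr u.1 +
              γ * ε * (‖x u.1‖ / invWeightedNorm Spr u.1) := by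
                rw [add_div]; ring
          _ ≤ _ := by linarith [hεη]
      · have htri : invWeightedNorm Γ (L (xt u.1)) ≤
            invWeightedNorm Γ (L (x u.1)) + γ * (ε * ‖x u.1‖) := by
          have hsplit : L (xt u.1) = L (x u.1) + L (xt u.1 - x u.1) := by
            rw [← map_add]; congr 1; abel
          have herr' : invWeightedNorm Γ (L (xt u.1 - x u.1)) ≤ γ * (ε * ‖x u.1‖) := by
            calc invWeightedNorm Γ (L (xt u.1 - x u.1)) ≤ γ * ‖xt u.1 - x u.1‖ := hLz _
              _ = γ * ‖x u.1 - xt u.1‖ := by rw [norm_sub_rev]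
              _ ≤ γ * (ε * ‖x u.1‖) := mul_le_mul_of_nonneg_left (happrox u.1) hγ0
          calc invWeightedNorm Γ (L (xt u.1)) ≤
              invWeightedNorm Γ (L (x u.1)) + invWeightedNorm Γ (L (xt u.1 - x u.1)) := by
                rw [hsplit]; exact iwn_triangle hΓ _ _
            _ ≤ _ := by linarith [herr']
        calc invWeightedNorm Γ (L (xt u.1)) / invWeightedNorm Spr u.1 ≤
            (invWeightedNorm Γ (L (x u.1)) + γ * (ε * ‖x u.1‖)) / invWeightedNorm Spr u.1 :=
              (div_le_div_iff_of_pos_right hp).2 htri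
          _ = invWeightedNorm Γ (L (x u.1)) / invWeightedNorm Spr u.1 +
              γ * ε * (‖x u.1‖ / invWeightedNorm Spr u.1) := by
                rw [add_div]; ring
          _ ≤ _ := by linarith [hεη]
    have hfbdd : BddBelow (Set.range fun u : {v : Fin M → ℝ // v ≠ 0} =>
        invWeightedNorm Γ (L (x u.1)) / invWeightedNorm Spr u.1) := by
      refine ⟨0, ?_⟩; rintro y ⟨u, rfl⟩
      exact div_nonneg (iwn_nonneg _ _) (iwn_nonneg _ _)
    have hgbdd : BddBelow (Set.range fun u : {v : Fin M → ℝ // v ≠ 0} =>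
        invWeightedNorm Γ (L (xt u.1)) / invWeightedNorm Spr u.1) := by
      refine ⟨0, ?_⟩; rintro y ⟨u, rfl⟩
      exact div_nonneg (iwn_nonneg _ _) (iwn_nonneg _ _)
    constructor
    · -- βGt - γηε ≤ βG : show βGt ≤ βG + c', i.e. βGt - c' ≤ f u via inf
      rw [hβG]
      refine le_ciInf fun u => ?_
      have h1 : βGt ≤ invWeightedNorm Γ (L (xt u.1)) / invWeightedNorm Spr u.1 :=
        hβGt ▸ ciInf_le hgbdd u
      linarith [(key u).2]
    · rw [hβGt] at *
      have h2 : βG - γ * ηbar * ε ≤ ⨅ u : {v : Fin M → ℝ // v ≠ 0},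
          invWeightedNorm Γ (L (xt u.1)) / invWeightedNorm Spr u.1 := by
        refine le_ciInf fun u => ?_
        have h1 : βG ≤ invWeightedNorm Γ (L (x u.1)) / invWeightedNorm Spr u.1 :=
          hβG ▸ ciInf_le hfbdd u
        linarith [(key u).1]
      linarith
end

section
/- Assume η_low := inf_{u≠0} ‖x(u)‖_X / ‖u‖_pr > 0, and let x̃ : ℝ^M → X satisfy ‖x(u) − x̃(u)‖_X ≤ ε ‖x(u)‖_X for all u ∈ ℝ^M, where 0 ≤ ε < 1. Suppose v ∈ ℝ^M, v ≠ 0, attains the infimum of u ↦ ‖L x̃(u)‖_Γ / ‖x̃(u)‖_X over nonzero u. Then β_W ≤ ‖L x(v)‖_Γ / ‖x(v)‖_X ≤ ((1+ε)/(1−ε)) (β_W + γ ε) + γ ε, where β_W := inf_{u≠0} ‖L x(u)‖_Γ / ‖x(u)‖_X. -/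
open Matrix

open scoped MatrixOrder in
lemma iwn_factor {n : ℕ} {A : Matrix (Fin n) (Fin n) ℝ} (hA : A.PosDef) :
    ∃ T : (Fin n → ℝ) →L[ℝ] EuclideanSpace ℝ (Fin n),
      ∀ d, invWeightedNorm A d = ‖T d‖ := by
  have hinv : (A⁻¹).PosSemidef := hA.inv.posSemidef
  set S := CFC.sqrt (A⁻¹) with hSdef
  have hS : S * S = A⁻¹ := CFC.sqrt_mul_sqrt_self _ hinv.nonneg
  have hSh : Sᵀ = S := by
    have := (CFC.sqrt_nonneg (A⁻¹)).posSemidef.isHermitian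
    exact (Matrix.conjTranspose_eq_transpose_of_trivial S).symm.trans this
  let T : (Fin n → ℝ) →L[ℝ] EuclideanSpace ℝ (Fin n) :=
    LinearMap.toContinuousLinearMap
      ((WithLp.linearEquiv 2 ℝ (Fin n → ℝ)).symm.toLinearMap ∘ₗ S.mulVecLin)
  refine ⟨T, fun d => ?_⟩
  have hT : ∀ d, (T d : Fin n → ℝ) = S *ᵥ d := fun d => rfl
  have h1 : d ⬝ᵥ (A⁻¹ *ᵥ d) = (S *ᵥ d) ⬝ᵥ (S *ᵥ d) := by
    rw [← hS, ← Matrix.mulVec_mulVec, dotProduct_mulVec (w := S *ᵥ d),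
      ← Matrix.vecMul_transpose, hSh]
  have h2 : ‖T d‖ = Real.sqrt ((S *ᵥ d) ⬝ᵥ (S *ᵥ d)) := by
    rw [EuclideanSpace.norm_eq]
    congr 1
    rw [dotProduct]
    refine Finset.sum_congr rfl fun i _ => ?_
    rw [hT, Real.norm_eq_abs, sq_abs, pow_two]
  rw [invWeightedNorm, h1, h2]

/-- If `v ≠ 0` attains the infimum of the surrogate quotient `u ↦ ‖L x̃(u)‖_Γ / ‖x̃(u)‖_X`,
then `β_W ≤ ‖L x(v)‖_Γ / ‖x(v)‖_X ≤ ((1+ε)/(1−ε)) (β_W + γ ε) + γ ε`. -/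
theorem surrogate_infimizer_W_bound {K M : ℕ}
    {X : Type*} [NormedAddCommGroup X] [InnerProductSpace ℝ X]
    (x : (Fin M → ℝ) →L[ℝ] X) (L : X →L[ℝ] (Fin K → ℝ))
    (Γ : Matrix (Fin K) (Fin K) ℝ) (hΓ : Γ.PosDef)
    (Spr : Matrix (Fin M) (Fin M) ℝ) (hpr : Spr.PosDef)
    (hη : 0 < ⨅ u : {v : Fin M → ℝ // v ≠ 0}, ‖x u.1‖ / invWeightedNorm Spr u.1)
    (xt : (Fin M → ℝ) → X) (ε : ℝ) (hε0 : 0 ≤ ε) (hε1 : ε < 1)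
    (happrox : ∀ u : Fin M → ℝ, ‖x u - xt u‖ ≤ ε * ‖x u‖)
    (γ βW : ℝ)
    (hγ : γ = ⨆ w : {w : X // ‖w‖ = 1}, invWeightedNorm Γ (L w.1))
    (hβW : βW = ⨅ u : {v : Fin M → ℝ // v ≠ 0},
      invWeightedNorm Γ (L (x u.1)) / ‖x u.1‖)
    (v : Fin M → ℝ) (hv0 : v ≠ 0)
    (hvinf : invWeightedNorm Γ (L (xt v)) / ‖xt v‖
      = ⨅ u : {w : Fin M → ℝ // w ≠ 0},
          invWeightedNorm Γ (L (xt u.1)) / ‖xt u.1‖) :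
    βW ≤ invWeightedNorm Γ (L (x v)) / ‖x v‖ ∧
      invWeightedNorm Γ (L (x v)) / ‖x v‖
        ≤ ((1 + ε) / (1 - ε)) * (βW + γ * ε) + γ * ε := by
  obtain ⟨T, hT⟩ := iwn_factor hΓ
  have hε1' : (0:ℝ) < 1 - ε := by linarith
  -- x u ≠ 0 for u ≠ 0
  have hxpos : ∀ u : Fin M → ℝ, u ≠ 0 → 0 < ‖x u‖ := by
    intro u hu
    have hbdd : BddBelow (Set.range fun u : {v : Fin M → ℝ // v ≠ 0} =>
        ‖x u.1‖ / invWeightedNorm Spr u.1) := by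
      refine ⟨0, ?_⟩
      rintro _ ⟨w, rfl⟩
      exact div_nonneg (norm_nonneg _) (iwn_nonneg _ _)
    have h := lt_of_lt_of_le hη (ciInf_le hbdd ⟨u, hu⟩)
    by_contra hle
    push_neg at hle
    have : ‖x u‖ = 0 := le_antisymm hle (norm_nonneg _)
    rw [this, zero_div] at h
    exact lt_irrefl 0 h
  have hxv : 0 < ‖x v‖ := hxpos v hv0
  -- norm comparisons between x and xt
  have hxt_lower : ∀ u : Fin M → ℝ, (1 - ε) * ‖x u‖ ≤ ‖xt u‖ := by
    intro u
    have h1 := norm_sub_norm_le (x u) (xt u)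
    have h2 := happrox u
    linarith
  have hxt_upper : ∀ u : Fin M → ℝ, ‖xt u‖ ≤ (1 + ε) * ‖x u‖ := by
    intro u
    have h1 := norm_sub_norm_le (xt u) (x u)
    rw [norm_sub_rev] at h1
    have h2 := happrox u
    linarith
  have hxtpos : ∀ u : Fin M → ℝ, u ≠ 0 → 0 < ‖xt u‖ := fun u hu =>
    lt_of_lt_of_le (by have := hxpos u hu; positivity) (hxt_lower u)
  -- facts about γ
  have hbddγ : BddAbove (Set.range fun w : {w : X // ‖w‖ = 1} =>
      invWeightedNorm Γ (L w.1)) := by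
    refine ⟨‖T‖ * ‖L‖, ?_⟩
    rintro _ ⟨w, rfl⟩
    dsimp only
    rw [hT]
    calc ‖T (L w.1)‖ ≤ ‖T‖ * ‖L w.1‖ := T.le_opNorm _
      _ ≤ ‖T‖ * (‖L‖ * ‖w.1‖) :=
        mul_le_mul_of_nonneg_left (L.le_opNorm _) (norm_nonneg _)
      _ = ‖T‖ * ‖L‖ := by rw [w.2, mul_one]
  have hw0 : ‖(‖x v‖⁻¹ • x v : X)‖ = 1 := by
    rw [norm_smul, Real.norm_eq_abs, abs_of_pos (by positivity), inv_mul_cancel₀ hxv.ne']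
  have hγ0 : 0 ≤ γ := by
    rw [hγ]
    exact le_trans (iwn_nonneg Γ _) (le_ciSup hbddγ ⟨_, hw0⟩)
  have hγle : ∀ w : X, invWeightedNorm Γ (L w) ≤ γ * ‖w‖ := by
    intro w
    rcases eq_or_ne w 0 with rfl | hw
    · rw [hT]; simp
    · have hwpos : 0 < ‖w‖ := norm_pos_iff.mpr hw
      have hu1 : ‖(‖w‖⁻¹ • w : X)‖ = 1 := by
        rw [norm_smul, Real.norm_eq_abs, abs_of_pos (by positivity),
          inv_mul_cancel₀ hwpos.ne']
      have h := le_ciSup hbddγ ⟨‖w‖⁻¹ • w, hu1⟩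
      rw [← hγ] at h
      rw [hT] at h ⊢
      have heq : T (L w) = ‖w‖ • T (L (‖w‖⁻¹ • w)) := by
        rw [_root_.map_smul, _root_.map_smul, smul_smul, mul_inv_cancel₀ hwpos.ne',
          one_smul]
      rw [heq, norm_smul, Real.norm_eq_abs, abs_of_pos hwpos]
      nlinarith [norm_nonneg (T (L (‖w‖⁻¹ • w)))]
  -- error bound
  have herr : ∀ u : Fin M → ℝ, ‖T (L (x u - xt u))‖ ≤ γ * ε * ‖x u‖ := by
    intro u
    calc ‖T (L (x u - xt u))‖ = invWeightedNorm Γ (L (x u - xt u)) := (hT _).symm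
      _ ≤ γ * ‖x u - xt u‖ := hγle _
      _ ≤ γ * (ε * ‖x u‖) := mul_le_mul_of_nonneg_left (happrox u) hγ0
      _ = γ * ε * ‖x u‖ := (mul_assoc _ _ _).symm
  have hsplit : ∀ u : Fin M → ℝ, T (L (xt u)) = T (L (x u)) - T (L (x u - xt u)) := by
    intro u
    rw [map_sub, map_sub]
    abel
  have hkey1 : ∀ u : Fin M → ℝ,
      invWeightedNorm Γ (L (xt u)) ≤ invWeightedNorm Γ (L (x u)) + γ * ε * ‖x u‖ := by
    intro u
    rw [hT, hT, hsplit u]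
    calc ‖T (L (x u)) - T (L (x u - xt u))‖
        ≤ ‖T (L (x u))‖ + ‖T (L (x u - xt u))‖ := norm_sub_le _ _
      _ ≤ ‖T (L (x u))‖ + γ * ε * ‖x u‖ := by linarith [herr u]
  have hkey2 : ∀ u : Fin M → ℝ,
      invWeightedNorm Γ (L (x u)) ≤ invWeightedNorm Γ (L (xt u)) + γ * ε * ‖x u‖ := by
    intro u
    rw [hT, hT]
    have : T (L (x u)) = T (L (xt u)) + T (L (x u - xt u)) := by
      rw [hsplit u]; abel
    rw [this]
    calc ‖T (L (xt u)) + T (L (x u - xt u))‖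
        ≤ ‖T (L (xt u))‖ + ‖T (L (x u - xt u))‖ := norm_add_le _ _
      _ ≤ ‖T (L (xt u))‖ + γ * ε * ‖x u‖ := by linarith [herr u]
  -- the surrogate infimum value
  set βt : ℝ := invWeightedNorm Γ (L (xt v)) / ‖xt v‖ with hβt
  have hβt0 : 0 ≤ βt := div_nonneg (iwn_nonneg _ _) (norm_nonneg _)
  have hbddRt : BddBelow (Set.range fun u : {w : Fin M → ℝ // w ≠ 0} =>
      invWeightedNorm Γ (L (xt u.1)) / ‖xt u.1‖) := by
    refine ⟨0, ?_⟩
    rintro _ ⟨u, rfl⟩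
    exact div_nonneg (iwn_nonneg _ _) (norm_nonneg _)
  have hβtle : ∀ u : Fin M → ℝ, u ≠ 0 →
      βt ≤ invWeightedNorm Γ (L (xt u)) / ‖xt u‖ := by
    intro u hu
    have h := ciInf_le hbddRt ⟨u, hu⟩
    rw [← hvinf] at h
    exact h
  -- Step B : (1-ε) βt - γ ε ≤ βW
  haveI : Nonempty {w : Fin M → ℝ // w ≠ 0} := ⟨⟨v, hv0⟩⟩
  have hB : (1 - ε) * βt - γ * ε ≤ βW := by
    rw [hβW]
    refine le_ciInf ?_
    rintro ⟨u, hu⟩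
    have hx := hxpos u hu
    have hxt := hxtpos u hu
    have h2 : invWeightedNorm Γ (L (xt u)) / ‖xt u‖
        ≤ (invWeightedNorm Γ (L (x u)) + γ * ε * ‖x u‖) / ((1 - ε) * ‖x u‖) := by
      refine div_le_div₀ (add_nonneg (iwn_nonneg _ _) (by positivity)) (hkey1 u) (by positivity) (hxt_lower u)
    have h3 := (le_div_iff₀ (by positivity : (0:ℝ) < (1 - ε) * ‖x u‖)).mp
      ((hβtle u hu).trans h2)
    rw [le_div_iff₀ hx]
    nlinarith [iwn_nonneg Γ (L (x u))]
  -- Step A : βW ≤ R(v)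
  have hbddR : BddBelow (Set.range fun u : {w : Fin M → ℝ // w ≠ 0} =>
      invWeightedNorm Γ (L (x u.1)) / ‖x u.1‖) := by
    refine ⟨0, ?_⟩
    rintro _ ⟨u, rfl⟩
    exact div_nonneg (iwn_nonneg _ _) (norm_nonneg _)
  have hA : βW ≤ invWeightedNorm Γ (L (x v)) / ‖x v‖ := by
    rw [hβW]
    exact ciInf_le hbddR ⟨v, hv0⟩
  refine ⟨hA, ?_⟩
  -- Step C : R(v) ≤ (1+ε) βt + γ ε
  have hxtv : 0 < ‖xt v‖ := hxtpos v hv0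
  have hC : invWeightedNorm Γ (L (x v)) / ‖x v‖ ≤ (1 + ε) * βt + γ * ε := by
    rw [div_le_iff₀ hxv]
    have hiwn : invWeightedNorm Γ (L (xt v)) = βt * ‖xt v‖ :=
      (div_mul_cancel₀ _ hxtv.ne').symm
    have h1 := hkey2 v
    rw [hiwn] at h1
    have h2 : βt * ‖xt v‖ ≤ βt * ((1 + ε) * ‖x v‖) :=
      mul_le_mul_of_nonneg_left (hxt_upper v) hβt0
    nlinarith
  -- combine
  have hβtle' : βt ≤ (βW + γ * ε) / (1 - ε) := by
    rw [le_div_iff₀ hε1']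
    linarith
  have hfinal : (1 + ε) * βt ≤ ((1 + ε) / (1 - ε)) * (βW + γ * ε) := by
    have := mul_le_mul_of_nonneg_left hβtle' (by linarith : (0:ℝ) ≤ 1 + ε)
    calc (1 + ε) * βt ≤ (1 + ε) * ((βW + γ * ε) / (1 - ε)) := this
      _ = ((1 + ε) / (1 - ε)) * (βW + γ * ε) := by
          field_simp
  linarith
end
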